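/- arXiv:2404.03343 — 5 statements merged into one kernel-verified Lean document; each statement's English description precedes it below -/
import Mathlib

section
/- Let N ≥ 1 and 0 < γ ≤ 1. Then there exists no classical solution of problem (P_γ) on the half space ℝ^N_+. -/
open Real Set

/-- The (pointwise) Laplacian of `u : ℝ^N → ℝ`, as the sum of the second
partial derivatives in the coordinate directions. -/
noncomputable def lapl {N : ℕ} (u : EuclideanSpace ℝ (Fin N) → ℝ)
    (x : EuclideanSpace ℝ (Fin N)) : ℝ :=
  ∑ i : Fin N, fderiv ℝ (fun y => fderiv ℝ u y (EuclideanSpace.single i (1 : ℝ))) x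
    (EuclideanSpace.single i (1 : ℝ))

/-- The last coordinate index of `Fin N` (for `N ≥ 1`), playing the role of `x_N`. -/
def lastIdx (N : ℕ) (hN : 1 ≤ N) : Fin N := ⟨N - 1, by omega⟩

/-- The open half space `ℝ^N_+ = {x ∈ ℝ^N : x_N > 0}`. -/
def halfSpace (N : ℕ) (hN : 1 ≤ N) : Set (EuclideanSpace ℝ (Fin N)) :=
  {x | 0 < x (lastIdx N hN)}

/-- A classical solution of problem `(P_γ)` on the half space:
`u ∈ C²(ℝ^N_+) ∩ C(closure ℝ^N_+)`, `u > 0` in `ℝ^N_+`, `u = 0` on `{x_N = 0}`,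
and `-Δu = u^{-γ}` in `ℝ^N_+`. -/
structure IsClassicalSolution (N : ℕ) (hN : 1 ≤ N) (γ : ℝ)
    (u : EuclideanSpace ℝ (Fin N) → ℝ) : Prop where
  smooth : ContDiffOn ℝ 2 u (halfSpace N hN)
  cont : ContinuousOn u (closure (halfSpace N hN))
  pos : ∀ x ∈ halfSpace N hN, 0 < u x
  bdry : ∀ x : EuclideanSpace ℝ (Fin N), x (lastIdx N hN) = 0 → u x = 0
  eq : ∀ x ∈ halfSpace N hN, -lapl u x = (u x) ^ (-γ)

/-!
Comparison principle on boxes: if `w` is continuous on a compact box in the half space, `w ≤ u`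
on the boundary of the box and `-Δw ≤ min 1 w⁻¹` wherever `w > 0`, then `w ≤ u` on the box.
Indeed, at an interior maximum of `w - u > 0` we would get
`u^{-γ} = -Δu ≤ -Δw ≤ min 1 w⁻¹ < u^{-γ}`, the last step because `γ ≤ 1`.
The subsolutions are `w(y) = P(y_N) ∏_{i < N} cos (q (y_i - x_i))` on a box of height `L` and
horizontal half-width `π / 2q`, for a one-variable profile `P` and a small frequency `q`.
The parabola `P(s) = s (L - s) / 4L` gives `u(x) ≥ x_N (L - x_N) / 4L`, hence `u(x) ≥ x_N / 4`
as `L → ∞`. With this bound on the top face `{y_N = L}`, the profile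
`P(s) = s √(1 + log ((L + 1) / (s + 1))) / 4` gives `u(x) ≥ √(1 + log ((L + 1) / 2)) / 4`
when `x_N = 1`, which is unbounded in `L`.
-/

open Filter Topology

theorem IsLocalMax.deriv_deriv_nonpos {f : ℝ → ℝ} {a : ℝ} (h : IsLocalMax f a)
    (hf : ContinuousAt f a) : deriv (deriv f) a ≤ 0 := by
  by_contra! hpos
  have hconst : f =ᶠ[𝓝 a] fun _ => f a := by
    filter_upwards [h, isLocalMin_of_deriv_deriv_pos hpos h.deriv_eq_zero hf] with y h₁ h₂
    exact le_antisymm h₁ h₂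
  have : deriv (deriv f) a = 0 := by
    rw [hconst.deriv.deriv_eq]
    simp
  exact hpos.ne' this

theorem IsLocalMax.fderiv_fderiv_apply_nonpos {E : Type*} [NormedAddCommGroup E]
    [NormedSpace ℝ E] {f : E → ℝ} {z v : E} (h : IsLocalMax f z)
    (hf : ∀ᶠ y in 𝓝 z, DifferentiableAt ℝ f y)
    (hf' : DifferentiableAt ℝ (fun y => fderiv ℝ f y v) z) :
    fderiv ℝ (fun y => fderiv ℝ f y v) z v ≤ 0 := by
  set c : ℝ → E := fun s => z + s • v
  have hc : ∀ s, HasDerivAt c v s := fun s =>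
    (((hasDerivAt_id' s).smul_const v).const_add z).congr_deriv (one_smul ℝ v)
  have hc0 : c 0 = z := by simp [c]
  have hcz : Tendsto c (𝓝 0) (𝓝 z) := hc0 ▸ (hc 0).continuousAt.tendsto
  have hderiv : deriv (f ∘ c) =ᶠ[𝓝 0] fun s => fderiv ℝ f (c s) v := by
    filter_upwards [hcz.eventually hf] with s hs
    exact (hs.hasFDerivAt.comp_hasDerivAt s (hc s)).deriv
  have hsecond : HasDerivAt (fun s => fderiv ℝ f (c s) v)
      (fderiv ℝ (fun y => fderiv ℝ f y v) z v) 0 := by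
    rw [← hc0] at hf' ⊢
    exact hf'.hasFDerivAt.comp_hasDerivAt 0 (hc 0)
  have hmax : IsLocalMax (f ∘ c) 0 := by
    simpa only [IsLocalMax, IsMaxFilter, Function.comp_apply, hc0] using hcz.eventually h
  have hcont : ContinuousAt (f ∘ c) 0 := by
    rw [← hc0] at hf
    exact (hf.self_of_nhds.hasFDerivAt.comp_hasDerivAt 0 (hc 0)).continuousAt
  rw [← (hsecond.congr_of_eventuallyEq hderiv).deriv]
  exact hmax.deriv_deriv_nonpos hcont

section Laplacian

variable {N : ℕ}

def PartialsDifferentiableAt (f : EuclideanSpace ℝ (Fin N) → ℝ)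
    (z : EuclideanSpace ℝ (Fin N)) : Prop :=
  (∀ᶠ y in 𝓝 z, DifferentiableAt ℝ f y) ∧
    ∀ k, DifferentiableAt ℝ (fun y => fderiv ℝ f y (EuclideanSpace.single k (1 : ℝ))) z

theorem ContDiffOn.partialsDifferentiableAt {f : EuclideanSpace ℝ (Fin N) → ℝ}
    {s : Set (EuclideanSpace ℝ (Fin N))} (hf : ContDiffOn ℝ 2 f s) (hs : IsOpen s)
    {z : EuclideanSpace ℝ (Fin N)} (hz : z ∈ s) : PartialsDifferentiableAt f z := by
  rw [show (2 : WithTop ℕ∞) = 1 + 1 from rfl, contDiffOn_succ_iff_fderiv_of_isOpen hs] at hf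
  refine ⟨?_, fun k => ?_⟩
  · filter_upwards [hs.mem_nhds hz] with y hy
    exact (hf.1.differentiableAt (hs.mem_nhds hy))
  · exact ((hf.2.2.clm_apply contDiffOn_const).differentiableOn one_ne_zero).differentiableAt
      (hs.mem_nhds hz)

theorem fderiv_sub_apply_eventuallyEq {f g : EuclideanSpace ℝ (Fin N) → ℝ}
    {z : EuclideanSpace ℝ (Fin N)} (hf : ∀ᶠ y in 𝓝 z, DifferentiableAt ℝ f y)
    (hg : ∀ᶠ y in 𝓝 z, DifferentiableAt ℝ g y) (v : EuclideanSpace ℝ (Fin N)) :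
    (fun y => fderiv ℝ (f - g) y v) =ᶠ[𝓝 z]
      (fun y => fderiv ℝ f y v) - fun y => fderiv ℝ g y v := by
  filter_upwards [hf, hg] with y hfy hgy
  simp [fderiv_sub hfy hgy]

theorem PartialsDifferentiableAt.sub {f g : EuclideanSpace ℝ (Fin N) → ℝ}
    {z : EuclideanSpace ℝ (Fin N)} (hf : PartialsDifferentiableAt f z)
    (hg : PartialsDifferentiableAt g z) : PartialsDifferentiableAt (f - g) z :=
  ⟨by filter_upwards [hf.1, hg.1] with y hfy hgy using hfy.sub hgy, fun k =>
    ((fderiv_sub_apply_eventuallyEq hf.1 hg.1 _).differentiableAt_iff).2 ((hf.2 k).sub (hg.2 k))⟩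

theorem lapl_sub {f g : EuclideanSpace ℝ (Fin N) → ℝ} {z : EuclideanSpace ℝ (Fin N)}
    (hf : PartialsDifferentiableAt f z) (hg : PartialsDifferentiableAt g z) :
    lapl (f - g) z = lapl f z - lapl g z := by
  rw [lapl, lapl, lapl, ← Finset.sum_sub_distrib]
  refine Finset.sum_congr rfl fun k _ => ?_
  rw [(fderiv_sub_apply_eventuallyEq hf.1 hg.1 _).fderiv_eq, fderiv_sub (hf.2 k) (hg.2 k)]
  rfl

theorem IsLocalMax.lapl_nonpos {f : EuclideanSpace ℝ (Fin N) → ℝ}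
    {z : EuclideanSpace ℝ (Fin N)} (h : IsLocalMax f z) (hf : PartialsDifferentiableAt f z) :
    lapl f z ≤ 0 :=
  Finset.sum_nonpos fun k _ => h.fderiv_fderiv_apply_nonpos hf.1 (hf.2 k)

end Laplacian

section Product

variable {N : ℕ}

theorem prod_update_apply (F : Fin N → ℝ → ℝ) (k : Fin N) (G : ℝ → ℝ)
    (y : EuclideanSpace ℝ (Fin N)) :
    ∏ i, Function.update F k G i (y i) = G (y k) * ∏ i ∈ Finset.univ.erase k, F i (y i) := by
  rw [← Finset.mul_prod_erase _ _ (Finset.mem_univ k), Function.update_self]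
  congr 1
  exact Finset.prod_congr rfl fun i hi => by rw [Function.update_of_ne (Finset.ne_of_mem_erase hi)]

theorem hasFDerivAt_prod_apply (F : Fin N → ℝ → ℝ) (F' : Fin N → ℝ)
    {x : EuclideanSpace ℝ (Fin N)} (hF : ∀ i, HasDerivAt (F i) (F' i) (x i)) :
    HasFDerivAt (fun y : EuclideanSpace ℝ (Fin N) => ∏ i, F i (y i))
      (∑ i, (∏ j ∈ Finset.univ.erase i, F j (x j)) • F' i • EuclideanSpace.proj (𝕜 := ℝ) i) x :=
  HasFDerivAt.finsetProd fun i _ => (hF i).comp_hasFDerivAt x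
    (EuclideanSpace.proj (𝕜 := ℝ) (ι := Fin N) i).hasFDerivAt

theorem fderiv_prod_apply_single (F : Fin N → ℝ → ℝ) (F' : Fin N → ℝ)
    {x : EuclideanSpace ℝ (Fin N)} (hF : ∀ i, HasDerivAt (F i) (F' i) (x i)) (k : Fin N) :
    fderiv ℝ (fun y : EuclideanSpace ℝ (Fin N) => ∏ i, F i (y i)) x
      (EuclideanSpace.single k 1) = F' k * ∏ j ∈ Finset.univ.erase k, F j (x j) := by
  rw [(hasFDerivAt_prod_apply F F' hF).fderiv, FunLike.coe_sum, Finset.sum_apply,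
    Finset.sum_eq_single k]
  · simp [mul_comm]
  · intro i _ hik
    simp [hik]
  · simp

variable {F F' : Fin N → ℝ → ℝ} {F'' : Fin N → ℝ} {z : EuclideanSpace ℝ (Fin N)}

theorem eventually_forall_hasDerivAt_apply
    (hF : ∀ i, ∀ᶠ t in 𝓝 (z i), HasDerivAt (F i) (F' i t) t) :
    ∀ᶠ y in 𝓝 z, ∀ i, HasDerivAt (F i) (F' i (y i)) (y i) :=
  eventually_all.2 fun i =>
    ((EuclideanSpace.proj (𝕜 := ℝ) (ι := Fin N) i).continuous.tendsto z).eventually (hF i)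

theorem fderiv_prod_apply_single_eventuallyEq
    (hF : ∀ i, ∀ᶠ t in 𝓝 (z i), HasDerivAt (F i) (F' i t) t) (k : Fin N) :
    (fun y => fderiv ℝ (fun y : EuclideanSpace ℝ (Fin N) => ∏ i, F i (y i)) y
      (EuclideanSpace.single k 1)) =ᶠ[𝓝 z] fun y => ∏ i, Function.update F k (F' k) i (y i) := by
  filter_upwards [eventually_forall_hasDerivAt_apply hF] with y hy
  rw [fderiv_prod_apply_single F _ hy, prod_update_apply]

theorem hasDerivAt_update_apply (hF : ∀ i, ∀ᶠ t in 𝓝 (z i), HasDerivAt (F i) (F' i t) t)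
    (hF' : ∀ i, HasDerivAt (F' i) (F'' i) (z i)) (k i : Fin N) :
    HasDerivAt (Function.update F k (F' k) i)
      (Function.update (fun j => F' j (z j)) k (F'' k) i) (z i) := by
  rcases eq_or_ne i k with rfl | hik
  · simpa using hF' i
  · simpa [hik] using (hF i).self_of_nhds

theorem partialsDifferentiableAt_prod_apply
    (hF : ∀ i, ∀ᶠ t in 𝓝 (z i), HasDerivAt (F i) (F' i t) t)
    (hF' : ∀ i, HasDerivAt (F' i) (F'' i) (z i)) :
    PartialsDifferentiableAt (fun y : EuclideanSpace ℝ (Fin N) => ∏ i, F i (y i)) z := by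
  refine ⟨?_, fun k => ?_⟩
  · filter_upwards [eventually_forall_hasDerivAt_apply hF] with y hy
    exact (hasFDerivAt_prod_apply F _ hy).differentiableAt
  · rw [(fderiv_prod_apply_single_eventuallyEq hF k).differentiableAt_iff]
    exact (hasFDerivAt_prod_apply _ _ (hasDerivAt_update_apply hF hF' k)).differentiableAt

theorem lapl_prod_apply (hF : ∀ i, ∀ᶠ t in 𝓝 (z i), HasDerivAt (F i) (F' i t) t)
    (hF' : ∀ i, HasDerivAt (F' i) (F'' i) (z i)) :
    lapl (fun y : EuclideanSpace ℝ (Fin N) => ∏ i, F i (y i)) z =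
      ∑ k, F'' k * ∏ j ∈ Finset.univ.erase k, F j (z j) := by
  refine Finset.sum_congr rfl fun k _ => ?_
  rw [(fderiv_prod_apply_single_eventuallyEq hF k).fderiv_eq,
    fderiv_prod_apply_single _ _ (hasDerivAt_update_apply hF hF' k) k]
  simp only [Function.update_self]
  congr 1
  exact Finset.prod_congr rfl fun j hj => by
    rw [Function.update_of_ne (Finset.ne_of_mem_erase hj)]

end Product

section Box

variable {N : ℕ}

theorem isCompact_setOf_forall_mem_Icc (a b : Fin N → ℝ) :
    IsCompact {y : EuclideanSpace ℝ (Fin N) | ∀ i, y i ∈ Icc (a i) (b i)} := by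
  convert (EuclideanSpace.equiv (Fin N) ℝ).toHomeomorph.isCompact_preimage.2
    (isCompact_univ_pi fun i => isCompact_Icc (a := a i) (b := b i)) using 1
  ext y
  simp only [mem_preimage, mem_univ_pi, mem_ofPred_eq]
  rfl

theorem isOpen_setOf_forall_mem_Ioo (a b : Fin N → ℝ) :
    IsOpen {y : EuclideanSpace ℝ (Fin N) | ∀ i, y i ∈ Ioo (a i) (b i)} := by
  rw [ofPred_forall]
  exact isOpen_iInter_of_finite fun i =>
    isOpen_Ioo.preimage (EuclideanSpace.proj (𝕜 := ℝ) (ι := Fin N) i).continuous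

variable (l : Fin N) (L R : ℝ) (c : EuclideanSpace ℝ (Fin N))

def box : Set (EuclideanSpace ℝ (Fin N)) := {y | y l ∈ Icc 0 L ∧ ∀ i ≠ l, |y i - c i| ≤ R}

def openBox : Set (EuclideanSpace ℝ (Fin N)) := {y | y l ∈ Ioo 0 L ∧ ∀ i ≠ l, |y i - c i| < R}

theorem box_eq : box l L R c = {y | ∀ i, y i ∈
    Icc (Function.update (fun i => c i - R) l 0 i) (Function.update (fun i => c i + R) l L i)} := by
  ext y
  refine ⟨fun ⟨hl, hR⟩ i => ?_, fun hy => ⟨by simpa using hy l, fun i hi => ?_⟩⟩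
  · rcases eq_or_ne i l with rfl | hi
    · simpa using hl
    · simpa [hi, abs_sub_comm, mem_Icc_iff_abs_le] using hR i hi
  · simpa [hi, abs_sub_comm, mem_Icc_iff_abs_le] using hy i

theorem openBox_eq : openBox l L R c = {y | ∀ i, y i ∈
    Ioo (Function.update (fun i => c i - R) l 0 i) (Function.update (fun i => c i + R) l L i)} := by
  ext y
  refine ⟨fun ⟨hl, hR⟩ i => ?_, fun hy => ⟨by simpa using hy l, fun i hi => ?_⟩⟩
  · rcases eq_or_ne i l with rfl | hi
    · simpa using hl
    · have := abs_sub_lt_iff.1 (hR i hi)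
      simp only [hi, ne_eq, not_false_eq_true, Function.update_of_ne, mem_Ioo]
      constructor <;> linarith
  · have := hy i
    simp only [hi, ne_eq, not_false_eq_true, Function.update_of_ne, mem_Ioo] at this
    exact abs_sub_lt_iff.2 ⟨by linarith, by linarith⟩

theorem isCompact_box : IsCompact (box l L R c) := by
  rw [box_eq]
  exact isCompact_setOf_forall_mem_Icc _ _

theorem isOpen_openBox : IsOpen (openBox l L R c) := by
  rw [openBox_eq]
  exact isOpen_setOf_forall_mem_Ioo _ _

variable {l L R c}

theorem openBox_subset_box : openBox l L R c ⊆ box l L R c :=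
  fun _ ⟨hl, hR⟩ => ⟨Ioo_subset_Icc_self hl, fun i hi => (hR i hi).le⟩

theorem eq_or_eq_or_exists_abs_eq_of_mem_box_sdiff {y : EuclideanSpace ℝ (Fin N)}
    (hy : y ∈ box l L R c \ openBox l L R c) :
    y l = 0 ∨ y l = L ∨ ∃ i ≠ l, |y i - c i| = R := by
  obtain ⟨⟨⟨hl0, hlL⟩, hR⟩, hyO⟩ := hy
  simp only [openBox, mem_ofPred_eq, mem_Ioo, not_and_or, not_lt, not_forall] at hyO
  rcases hyO with (h | h) | ⟨i, hi, h⟩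
  · exact Or.inl (le_antisymm h hl0)
  · exact Or.inr (Or.inl (le_antisymm hlL h))
  · exact Or.inr (Or.inr ⟨i, hi, le_antisymm (hR i hi) h⟩)

end Box

section Comparison

variable {N : ℕ} {hN : 1 ≤ N} {γ : ℝ} {u : EuclideanSpace ℝ (Fin N) → ℝ}

theorem isOpen_halfSpace : IsOpen (halfSpace N hN) :=
  isOpen_lt continuous_const (EuclideanSpace.proj (𝕜 := ℝ) (lastIdx N hN)).continuous

theorem closure_halfSpace_eq : closure (halfSpace N hN) = {x | 0 ≤ x (lastIdx N hN)} := by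
  have hopen : IsOpenMap (EuclideanSpace.proj (𝕜 := ℝ) (ι := Fin N) (lastIdx N hN)) :=
    ContinuousLinearMap.isOpenMap _ fun t => ⟨EuclideanSpace.single (lastIdx N hN) t, by simp⟩
  have h := hopen.preimage_closure_eq_closure_preimage (ContinuousLinearMap.continuous _) (Ioi 0)
  rw [closure_Ioi] at h
  exact h.symm

theorem IsClassicalSolution.nonneg (S : IsClassicalSolution N hN γ u)
    {x : EuclideanSpace ℝ (Fin N)} (hx : 0 ≤ x (lastIdx N hN)) : 0 ≤ u x := by
  rcases hx.eq_or_lt with h | h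
  · rw [S.bdry x h.symm]
  · exact (S.pos x h).le

theorem min_one_inv_lt_rpow_neg {s t γ : ℝ} (hs : 0 < s) (hst : s < t) (hγ0 : 0 < γ)
    (hγ1 : γ ≤ 1) : min 1 t⁻¹ < s ^ (-γ) := by
  rcases lt_or_ge s 1 with hs1 | hs1
  · exact (min_le_left _ _).trans_lt
      ((one_lt_rpow_iff_of_pos hs).2 (Or.inr ⟨hs1, by linarith⟩))
  · calc min 1 t⁻¹ ≤ t⁻¹ := min_le_right _ _
      _ < s⁻¹ := inv_strictAnti₀ hs hst
      _ = s ^ (-1 : ℝ) := (rpow_neg_one s).symm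
      _ ≤ s ^ (-γ) := rpow_le_rpow_of_exponent_le hs1 (by linarith)

theorem IsClassicalSolution.le_of_subsolution (S : IsClassicalSolution N hN γ u) (hγ0 : 0 < γ)
    (hγ1 : γ ≤ 1) {w : EuclideanSpace ℝ (Fin N) → ℝ} {B O : Set (EuclideanSpace ℝ (Fin N))}
    (hB : IsCompact B) (hO : IsOpen O) (hOB : O ⊆ B) (hBH : B ⊆ closure (halfSpace N hN))
    (hOH : O ⊆ halfSpace N hN) (hwc : ContinuousOn w B)
    (hw : ∀ z ∈ O, PartialsDifferentiableAt w z)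
    (hsub : ∀ z ∈ O, 0 < w z → -lapl w z ≤ min 1 (w z)⁻¹)
    (hbdry : ∀ z ∈ B \ O, w z ≤ u z) {x : EuclideanSpace ℝ (Fin N)} (hx : x ∈ B) :
    w x ≤ u x := by
  by_contra! hux
  obtain ⟨z, hzB, hzmax⟩ := hB.exists_isMaxOn ⟨x, hx⟩ (hwc.sub (S.cont.mono hBH))
  have huw : u z < w z := by linarith [show w x - u x ≤ w z - u z from hzmax hx]
  have hzO : z ∈ O := by
    by_contra hzO
    exact huw.not_ge (hbdry z ⟨hzB, hzO⟩)
  have hzH := hOH hzO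
  have huz := S.pos z hzH
  have hmax : IsLocalMax (w - u) z := by
    filter_upwards [hO.mem_nhds hzO] with y hy using hzmax (hOB hy)
  have hu := S.smooth.partialsDifferentiableAt isOpen_halfSpace hzH
  have hlapl := hmax.lapl_nonpos ((hw z hzO).sub hu)
  rw [lapl_sub (hw z hzO) hu] at hlapl
  linarith [S.eq z hzH, hsub z hzO (huz.trans huw), min_one_inv_lt_rpow_neg huz huw hγ0 hγ1]

end Comparison

section TestFunction

variable {N : ℕ}

-- `P (y l) * ∏_{i ≠ l} cos (q (y i - c i))` (see `testFun_eq`), written as a product of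
-- one-variable factors so that `lapl_prod_apply` applies.
noncomputable def testFun (l : Fin N) (P : ℝ → ℝ) (q : ℝ) (c y : EuclideanSpace ℝ (Fin N)) : ℝ :=
  ∏ i, Function.update (fun i s => cos (q * (s - c i))) l P i (y i)

variable {l : Fin N} {P P' : ℝ → ℝ} {p'' q : ℝ} {c z : EuclideanSpace ℝ (Fin N)}

theorem testFun_eq (y : EuclideanSpace ℝ (Fin N)) :
    testFun l P q c y = P (y l) * ∏ i ∈ Finset.univ.erase l, cos (q * (y i - c i)) :=
  prod_update_apply _ l P y

theorem testFun_self : testFun l P q c c = P (c l) := by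
  simp [testFun_eq]

theorem ContinuousOn.testFun {s : Set ℝ} (hP : ContinuousOn P s) :
    ContinuousOn (testFun l P q c) {y | y l ∈ s} := by
  refine ContinuousOn.congr ?_ fun y _ => testFun_eq y
  refine (hP.comp (EuclideanSpace.proj (𝕜 := ℝ) l).continuous.continuousOn fun y hy => hy).mul
    (Continuous.continuousOn ?_)
  exact continuous_finsetProd _ fun i _ => continuous_cos.comp (continuous_const.mul
    ((EuclideanSpace.proj (𝕜 := ℝ) i).continuous.sub continuous_const))

theorem hasDerivAt_cos_mul_sub (q a s : ℝ) :
    HasDerivAt (fun s => cos (q * (s - a))) (-(q * sin (q * (s - a)))) s := by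
  refine (((hasDerivAt_id' s).sub_const a).const_mul q).cos.congr_deriv ?_
  ring

theorem hasDerivAt_neg_mul_sin_mul_sub (q a s : ℝ) :
    HasDerivAt (fun s => -(q * sin (q * (s - a)))) (-q ^ 2 * cos (q * (s - a))) s := by
  refine ((((hasDerivAt_id' s).sub_const a).const_mul q).sin.const_mul q).fun_neg.congr_deriv ?_
  ring

theorem hasDerivAt_testFun_factor (hP : ∀ᶠ t in 𝓝 (z l), HasDerivAt P (P' t) t) (i : Fin N) :
    ∀ᶠ t in 𝓝 (z i), HasDerivAt (Function.update (fun i s => cos (q * (s - c i))) l P i)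
      (Function.update (fun i s => -(q * sin (q * (s - c i)))) l P' i t) t := by
  rcases eq_or_ne i l with rfl | hil
  · simpa using hP
  · simpa [hil] using Eventually.of_forall fun t => hasDerivAt_cos_mul_sub q (c i) t

theorem hasDerivAt_testFun_factor_deriv (hP' : HasDerivAt P' p'' (z l)) (i : Fin N) :
    HasDerivAt (Function.update (fun i s => -(q * sin (q * (s - c i)))) l P' i)
      (Function.update (fun i => -q ^ 2 * cos (q * (z i - c i))) l p'' i) (z i) := by
  rcases eq_or_ne i l with rfl | hil
  · simpa using hP'
  · simpa [hil] using hasDerivAt_neg_mul_sin_mul_sub q (c i) (z i)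

theorem partialsDifferentiableAt_testFun (hP : ∀ᶠ t in 𝓝 (z l), HasDerivAt P (P' t) t)
    (hP' : HasDerivAt P' p'' (z l)) : PartialsDifferentiableAt (testFun l P q c) z :=
  partialsDifferentiableAt_prod_apply (hasDerivAt_testFun_factor hP)
    (hasDerivAt_testFun_factor_deriv hP')

theorem lapl_testFun (hP : ∀ᶠ t in 𝓝 (z l), HasDerivAt P (P' t) t)
    (hP' : HasDerivAt P' p'' (z l)) : lapl (testFun l P q c) z =
    (p'' - (N - 1) * q ^ 2 * P (z l)) * ∏ i ∈ Finset.univ.erase l, cos (q * (z i - c i)) := by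
  unfold testFun
  rw [lapl_prod_apply (hasDerivAt_testFun_factor hP) (hasDerivAt_testFun_factor_deriv hP'),
    ← Finset.add_sum_erase _ _ (Finset.mem_univ l)]
  have hside : ∀ k ∈ Finset.univ.erase l,
      Function.update (fun i => -q ^ 2 * cos (q * (z i - c i))) l p'' k *
        ∏ j ∈ Finset.univ.erase k, Function.update (fun i s => cos (q * (s - c i))) l P j (z j) =
      -q ^ 2 * (P (z l) * ∏ i ∈ Finset.univ.erase l, cos (q * (z i - c i))) := by
    intro k hk
    have hkl := Finset.ne_of_mem_erase hk
    rw [← testFun_eq, testFun, ← Finset.mul_prod_erase _ _ (Finset.mem_univ k),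
      Function.update_of_ne hkl, Function.update_of_ne hkl, mul_assoc]
  rw [Finset.sum_congr rfl hside, Finset.sum_const, Finset.card_erase_of_mem (Finset.mem_univ l),
    Finset.card_univ, Fintype.card_fin, nsmul_eq_mul, Nat.cast_sub l.pos, Function.update_self,
    Finset.prod_congr rfl fun j hj => by rw [Function.update_of_ne (Finset.ne_of_mem_erase hj)]]
  push_cast
  ring

end TestFunction

section AdmissibleProfile

theorem mul_le_min_one_inv {A p C : ℝ} (hA : A ≤ 1) (hAp : A * p ≤ 1) (hC0 : 0 ≤ C)
    (hC1 : C ≤ 1) (hpC : 0 < p * C) : A * C ≤ min 1 (p * C)⁻¹ := by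
  refine le_min (by nlinarith) ?_
  rw [← one_div, le_div_iff₀ hpC]
  nlinarith [mul_nonneg hC0 hC0]

-- The bounds that make `testFun` a subsolution `-Δw ≤ min 1 w⁻¹` on a box of height `L`
-- whose cosines oscillate slowly enough: see `IsAdmissibleProfile.neg_lapl_testFun_le`.
structure IsAdmissibleProfile (L : ℝ) (P P' P'' : ℝ → ℝ) : Prop where
  continuousOn : ContinuousOn P (Icc 0 L)
  map_zero : P 0 = 0
  nonneg : ∀ s ∈ Icc 0 L, 0 ≤ P s
  le : ∀ s ∈ Ioo 0 L, P s ≤ L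
  hasDerivAt : ∀ s ∈ Ioo 0 L, HasDerivAt P (P' s) s
  hasDerivAt_deriv : ∀ s ∈ Ioo 0 L, HasDerivAt P' (P'' s) s
  neg_deriv2_le : ∀ s ∈ Ioo 0 L, -P'' s ≤ 1 / 2
  neg_deriv2_mul_le : ∀ s ∈ Ioo 0 L, -P'' s * P s ≤ 1 / 2

variable {N : ℕ} {L : ℝ} {P P' P'' : ℝ → ℝ} {l : Fin N} {q R : ℝ}
  {c z : EuclideanSpace ℝ (Fin N)}

theorem abs_mul_sub_le_pi_div_two (hq : 0 < q) (hqR : q * R = π / 2) {s t : ℝ}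
    (h : |s - t| ≤ R) : |q * (s - t)| ≤ π / 2 := by
  rw [abs_mul, abs_of_pos hq, ← hqR]
  exact mul_le_mul_of_nonneg_left h hq.le

theorem abs_mul_sub_lt_pi_div_two (hq : 0 < q) (hqR : q * R = π / 2) {s t : ℝ}
    (h : |s - t| < R) : |q * (s - t)| < π / 2 := by
  rw [abs_mul, abs_of_pos hq, ← hqR]
  exact mul_lt_mul_of_pos_left h hq

theorem IsAdmissibleProfile.eventually_hasDerivAt (hP : IsAdmissibleProfile L P P' P'') {s : ℝ}
    (hs : s ∈ Ioo 0 L) : ∀ᶠ t in 𝓝 s, HasDerivAt P (P' t) t :=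
  eventually_of_mem (isOpen_Ioo.mem_nhds hs) hP.hasDerivAt

theorem IsAdmissibleProfile.neg_lapl_testFun_le (hP : IsAdmissibleProfile L P P' P'')
    (hL : 1 ≤ L) (hq : 0 < q) (hqR : q * R = π / 2) (hqL : (N - 1) * q ^ 2 * L ^ 2 ≤ 1 / 16)
    (hz : z ∈ openBox l L R c) (hw : 0 < testFun l P q c z) :
    -lapl (testFun l P q c) z ≤ min 1 (testFun l P q c z)⁻¹ := by
  have hN : (1 : ℝ) ≤ N := by exact_mod_cast l.pos
  have hcos : ∀ i ∈ Finset.univ.erase l, 0 < cos (q * (z i - c i)) := fun i hi =>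
    cos_pos_of_mem_Ioo (abs_lt.1 (abs_mul_sub_lt_pi_div_two hq hqR
      (hz.2 i (Finset.ne_of_mem_erase hi))))
  have hC0 := Finset.prod_pos hcos
  have hC1 := Finset.prod_le_one (fun i hi => (hcos i hi).le) fun i _ => cos_le_one _
  rw [testFun_eq] at hw ⊢
  rw [lapl_testFun (hP.eventually_hasDerivAt hz.1) (hP.hasDerivAt_deriv _ hz.1)]
  have hκ : 0 ≤ (N - 1) * q ^ 2 := mul_nonneg (by linarith) (sq_nonneg q)
  have hPs := hP.nonneg _ (Ioo_subset_Icc_self hz.1)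
  have hPL := hP.le _ hz.1
  have h1 := hP.neg_deriv2_le _ hz.1
  have h2 := hP.neg_deriv2_mul_le _ hz.1
  have hκP : (N - 1) * q ^ 2 * P (z l) ≤ 1 / 16 := by
    nlinarith [mul_le_mul_of_nonneg_left hPL hκ]
  have hκP2 : (N - 1) * q ^ 2 * P (z l) * P (z l) ≤ 1 / 16 := by
    nlinarith [mul_le_mul_of_nonneg_left (mul_le_mul hPL hPL hPs (by linarith)) hκ]
  have := mul_le_min_one_inv (A := -P'' (z l) + (N - 1) * q ^ 2 * P (z l)) (by linarith)
    (by nlinarith) hC0.le hC1 hw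
  convert this using 1
  ring

theorem IsAdmissibleProfile.testFun_le_of_mem_box_sdiff (hP : IsAdmissibleProfile L P P' P'')
    (hq : 0 < q) (hqR : q * R = π / 2) (hz : z ∈ box l L R c \ openBox l L R c) {v : ℝ}
    (hv : 0 ≤ v) (htop : z l = L → P L ≤ v) : testFun l P q c z ≤ v := by
  rcases eq_or_eq_or_exists_abs_eq_of_mem_box_sdiff hz with h0 | hL | ⟨i, hil, hi⟩
  · rwa [testFun_eq, h0, hP.map_zero, zero_mul]
  · have hC : ∏ i ∈ Finset.univ.erase l, cos (q * (z i - c i)) ≤ 1 :=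
      Finset.prod_le_one (fun i hi => cos_nonneg_of_mem_Icc (abs_le.1
        (abs_mul_sub_le_pi_div_two hq hqR (hz.1.2 i (Finset.ne_of_mem_erase hi)))))
        fun i _ => cos_le_one _
    rw [testFun_eq, hL]
    exact (mul_le_of_le_one_right (hP.nonneg L (hL ▸ hz.1.1)) hC).trans (htop hL)
  · have hcos : cos (q * (z i - c i)) = 0 := by
      rw [← cos_abs, abs_mul, abs_of_pos hq, hi, hqR, cos_pi_div_two]
    rwa [testFun, Finset.prod_eq_zero (Finset.mem_univ i) (by simpa [hil] using hcos)]

end AdmissibleProfile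

section LowerBounds

variable {N : ℕ} {hN : 1 ≤ N} {γ : ℝ} {u : EuclideanSpace ℝ (Fin N) → ℝ}

theorem IsClassicalSolution.profile_le (S : IsClassicalSolution N hN γ u) (hγ0 : 0 < γ)
    (hγ1 : γ ≤ 1) {L : ℝ} (hL : 1 ≤ L) {P P' P'' : ℝ → ℝ} (hP : IsAdmissibleProfile L P P' P'')
    (htop : ∀ y : EuclideanSpace ℝ (Fin N), y (lastIdx N hN) = L → P L ≤ u y)
    {x : EuclideanSpace ℝ (Fin N)} (hx : x (lastIdx N hN) ∈ Icc 0 L) :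
    P (x (lastIdx N hN)) ≤ u x := by
  set l := lastIdx N hN
  have hN' : (1 : ℝ) ≤ N := by exact_mod_cast hN
  set q : ℝ := 1 / (4 * N * L)
  have hq : 0 < q := by positivity
  have hqL : (N - 1) * q ^ 2 * L ^ 2 ≤ 1 / 16 := by
    rw [show (N - 1) * q ^ 2 * L ^ 2 = (N - 1) / N ^ 2 / 16 by simp only [q]; field_simp; ring]
    gcongr
    rw [div_le_one (by positivity)]
    nlinarith
  set R := π / (2 * q)
  have hqR : q * R = π / 2 := by simp only [R]; field_simp
  have key := S.le_of_subsolution hγ0 hγ1 (w := testFun l P q x)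
    (isCompact_box l L R x) (isOpen_openBox l L R x) openBox_subset_box
    (fun y hy => closure_halfSpace_eq.symm ▸ hy.1.1) (fun y hy => hy.1.1)
    (hP.continuousOn.testFun.mono fun y hy => hy.1)
    (fun z hz => partialsDifferentiableAt_testFun (hP.eventually_hasDerivAt hz.1)
      (hP.hasDerivAt_deriv _ hz.1))
    (fun z hz hw => hP.neg_lapl_testFun_le hL hq hqR hqL hz hw)
    (fun z hz => hP.testFun_le_of_mem_box_sdiff hq hqR hz (S.nonneg hz.1.1.1) (htop z))
    (x := x) ⟨hx, fun i _ => by simp only [sub_self, abs_zero]; positivity⟩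
  rwa [testFun_self] at key

theorem isAdmissibleProfile_parabola {L : ℝ} (hL : 1 ≤ L) :
    IsAdmissibleProfile L (fun s => s * (L - s) / (4 * L)) (fun s => (L - 2 * s) / (4 * L))
      (fun _ => -(1 / (2 * L))) where
  continuousOn := by fun_prop
  map_zero := by simp
  nonneg s hs := div_nonneg (mul_nonneg hs.1 (by linarith [hs.2])) (by positivity)
  le s hs := by
    rw [div_le_iff₀ (by positivity)]
    nlinarith [hs.1, hs.2]
  hasDerivAt s _ := by
    refine (((hasDerivAt_id' s).mul ((hasDerivAt_const s L).sub (hasDerivAt_id' s))).div_const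
      (4 * L)).congr_deriv ?_
    simp only [Pi.sub_apply]
    ring
  hasDerivAt_deriv s _ := by
    refine (((hasDerivAt_const s L).sub ((hasDerivAt_id' s).const_mul 2)).div_const
      (4 * L)).congr_deriv ?_
    field_simp
    ring
  neg_deriv2_le s _ := by
    rw [neg_neg]
    gcongr
    linarith
  neg_deriv2_mul_le s hs := by
    rw [neg_neg, div_mul_div_comm, div_le_div_iff₀ (by positivity) (by norm_num)]
    nlinarith [hs.1, hs.2]

theorem IsClassicalSolution.div_four_le (S : IsClassicalSolution N hN γ u) (hγ0 : 0 < γ)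
    (hγ1 : γ ≤ 1) {x : EuclideanSpace ℝ (Fin N)} (hx : 0 ≤ x (lastIdx N hN)) :
    x (lastIdx N hN) / 4 ≤ u x := by
  set t := x (lastIdx N hN)
  have hbound : ∀ L ≥ max 1 t, t * (L - t) / (4 * L) ≤ u x := fun L hL =>
    have hL1 := le_of_max_le_left hL
    S.profile_le hγ0 hγ1 hL1 (isAdmissibleProfile_parabola hL1)
      (fun y hy => by simpa using S.nonneg (x := y) (by linarith)) ⟨hx, le_of_max_le_right hL⟩
  have hlim : Tendsto (fun L => t / 4 - t ^ 2 / 4 * L⁻¹) atTop (𝓝 (t / 4)) := by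
    simpa using (tendsto_inv_atTop_zero.const_mul (t ^ 2 / 4)).const_sub (t / 4)
  refine le_of_tendsto hlim ?_
  filter_upwards [eventually_ge_atTop (max 1 t)] with L hL
  have hL0 : 0 < L := by linarith [le_of_max_le_left hL]
  calc t / 4 - t ^ 2 / 4 * L⁻¹ = t * (L - t) / (4 * L) := by field_simp
    _ ≤ u x := hbound L hL

end LowerBounds

section SqrtLogProfile

variable {L s : ℝ}

noncomputable def sqrtLog (L s : ℝ) : ℝ := √(1 + log (L + 1) - log (s + 1))

noncomputable def sqrtLogDeriv (L s : ℝ) : ℝ := -1 / (2 * (s + 1) * sqrtLog L s)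

noncomputable def sqrtLogDeriv2 (L s : ℝ) : ℝ :=
  (2 * sqrtLog L s ^ 2 - 1) / (4 * (s + 1) ^ 2 * sqrtLog L s ^ 3)

theorem sqrtLog_sq (hs : s ∈ Icc 0 L) : sqrtLog L s ^ 2 = 1 + log (L + 1) - log (s + 1) := by
  have := log_le_log (by linarith [hs.1]) (by linarith [hs.2] : s + 1 ≤ L + 1)
  exact sq_sqrt (by linarith)

theorem one_le_sqrtLog (hs : s ∈ Icc 0 L) : 1 ≤ sqrtLog L s := by
  have := log_le_log (by linarith [hs.1]) (by linarith [hs.2] : s + 1 ≤ L + 1)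
  exact one_le_sqrt.2 (by linarith)

theorem sq_sqrtLog_le (hs : s ∈ Icc 0 L) : sqrtLog L s ^ 2 ≤ (L + 1) / (s + 1) := by
  have hs1 : 0 < s + 1 := by linarith [hs.1]
  have hL1 : 0 < L + 1 := by linarith [hs.1, hs.2]
  rw [sqrtLog_sq hs, add_sub_assoc, ← log_div hL1.ne' hs1.ne']
  linarith [log_le_sub_one_of_pos (div_pos hL1 hs1)]

theorem mul_sqrtLog_le (hs : s ∈ Icc 0 L) : s * sqrtLog L s ≤ L + 1 := by
  have hF := one_le_sqrtLog hs
  have hF2 := (le_div_iff₀ (by linarith [hs.1])).1 (sq_sqrtLog_le hs)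
  have hsq : (s * sqrtLog L s) ^ 2 ≤ (L + 1) ^ 2 := by
    nlinarith [mul_le_mul_of_nonneg_left hF2 hs.1, mul_nonneg hs.1 (sq_nonneg (sqrtLog L s)),
      hs.2]
  exact (pow_le_pow_iff_left₀ (by nlinarith [hs.1]) (by linarith [hs.1, hs.2]) two_ne_zero).1 hsq

theorem sqrtLogDeriv2_nonneg (hs : s ∈ Icc 0 L) : 0 ≤ sqrtLogDeriv2 L s := by
  have hF := one_le_sqrtLog hs
  exact div_nonneg (by nlinarith) (by positivity)

theorem hasDerivAt_sqrtLog (hs : s ∈ Icc 0 L) : HasDerivAt (sqrtLog L) (sqrtLogDeriv L s) s := by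
  have hs1 : s + 1 ≠ 0 := by linarith [hs.1]
  have hF := one_le_sqrtLog hs
  refine ((((hasDerivAt_id' s).add_const 1).log hs1).const_sub (1 + log (L + 1))).sqrt
    ?_ |>.congr_deriv ?_
  · rw [← sqrtLog_sq hs]
    positivity
  · rw [sqrtLogDeriv, sqrtLog]
    field_simp

theorem hasDerivAt_sqrtLogDeriv (hs : s ∈ Icc 0 L) :
    HasDerivAt (sqrtLogDeriv L) (sqrtLogDeriv2 L s) s := by
  have hs1 : 0 < s + 1 := by linarith [hs.1]
  have hF := one_le_sqrtLog hs
  refine ((hasDerivAt_const s (-1 : ℝ)).div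
    ((((hasDerivAt_id' s).add_const 1).const_mul 2).mul (hasDerivAt_sqrtLog hs))
    (mul_pos (by positivity) (by linarith)).ne').congr_deriv ?_
  simp only [Pi.mul_apply, sqrtLogDeriv2, sqrtLogDeriv]
  field_simp
  ring

theorem neg_sqrtLogProfile_deriv2_le (hs : s ∈ Icc 0 L) :
    -((2 * sqrtLogDeriv L s + s * sqrtLogDeriv2 L s) / 4) ≤ 1 / (4 * (s + 1) * sqrtLog L s) := by
  have hF := one_le_sqrtLog hs
  have hF' : 2 * sqrtLogDeriv L s / 4 = -(1 / (4 * (s + 1) * sqrtLog L s)) := by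
    rw [sqrtLogDeriv]
    field_simp
  nlinarith [mul_nonneg hs.1 (sqrtLogDeriv2_nonneg hs)]

theorem isAdmissibleProfile_sqrtLog (hL : 1 ≤ L) :
    IsAdmissibleProfile L (fun s => s * sqrtLog L s / 4)
      (fun s => (sqrtLog L s + s * sqrtLogDeriv L s) / 4)
      (fun s => (2 * sqrtLogDeriv L s + s * sqrtLogDeriv2 L s) / 4) where
  continuousOn s hs :=
    ((continuousAt_id.mul (hasDerivAt_sqrtLog hs).continuousAt).div_const 4).continuousWithinAt
  map_zero := by simp
  nonneg s hs := div_nonneg (mul_nonneg hs.1 (sqrt_nonneg _)) (by norm_num)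
  le s hs := by linarith [mul_sqrtLog_le (Ioo_subset_Icc_self hs)]
  hasDerivAt s hs := by
    refine (((hasDerivAt_id' s).mul (hasDerivAt_sqrtLog (Ioo_subset_Icc_self hs))).div_const
      4).congr_deriv ?_
    simp
  hasDerivAt_deriv s hs := by
    refine (((hasDerivAt_sqrtLog (Ioo_subset_Icc_self hs)).add ((hasDerivAt_id' s).mul
      (hasDerivAt_sqrtLogDeriv (Ioo_subset_Icc_self hs)))).div_const 4).congr_deriv ?_
    simp only [one_mul]
    ring
  neg_deriv2_le s hs := by
    have hF := one_le_sqrtLog (Ioo_subset_Icc_self hs)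
    refine (neg_sqrtLogProfile_deriv2_le (Ioo_subset_Icc_self hs)).trans ?_
    rw [div_le_div_iff₀ (by nlinarith [hs.1]) (by norm_num)]
    nlinarith [hs.1]
  neg_deriv2_mul_le s hs := by
    have hF := one_le_sqrtLog (Ioo_subset_Icc_self hs)
    refine (mul_le_mul_of_nonneg_right (neg_sqrtLogProfile_deriv2_le (Ioo_subset_Icc_self hs))
      (by nlinarith [hs.1])).trans ?_
    rw [div_mul_div_comm, div_le_div_iff₀ (by nlinarith [hs.1]) (by norm_num)]
    nlinarith [hs.1]

end SqrtLogProfile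

/-- for `0 < γ ≤ 1` there is no classical solution of `(P_γ)`
on the half space. -/
theorem no_solution_small_gamma (N : ℕ) (hN : 1 ≤ N) (γ : ℝ) (hγ0 : 0 < γ)
    (hγ1 : γ ≤ 1) :
    ¬ ∃ u : EuclideanSpace ℝ (Fin N) → ℝ, IsClassicalSolution N hN γ u := by
  rintro ⟨u, S⟩
  set x₀ := EuclideanSpace.single (lastIdx N hN) (1 : ℝ)
  have hx₀ : x₀ (lastIdx N hN) = 1 := by simp [x₀]
  have hbound : ∀ L ≥ 1, √(1 + log (L + 1) - log 2) / 4 ≤ u x₀ := by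
    intro L hL
    have htop : ∀ y : EuclideanSpace ℝ (Fin N), y (lastIdx N hN) = L → L * sqrtLog L L / 4 ≤ u y :=
      fun y hy => by simpa [sqrtLog, hy] using S.div_four_le hγ0 hγ1 (x := y) (by linarith)
    simpa [hx₀, sqrtLog, one_add_one_eq_two] using
      S.profile_le hγ0 hγ1 hL (isAdmissibleProfile_sqrtLog hL) htop (x := x₀)
        (by rw [hx₀]; exact ⟨zero_le_one, hL⟩)
  have hlim : Tendsto (fun L => √(1 + log (L + 1) - log 2) / 4) atTop atTop := by
    refine (tendsto_sqrt_atTop.comp ?_).atTop_div_const (by norm_num)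
    have := tendsto_atTop_add_const_left _ (1 - log 2)
      (tendsto_log_atTop.comp (tendsto_atTop_add_const_right atTop 1 tendsto_id))
    exact this.congr fun L => by simp only [Function.comp_apply, id]; ring
  obtain ⟨L, hL, hL1⟩ := ((hlim.eventually_gt_atTop (u x₀)).and (eventually_ge_atTop 1)).exists
  linarith [hbound L hL1]
end

section
/- Let γ > 1. Then there exists a function v ∈ C²((0,∞)) ∩ C([0,∞)) with v > 0 on (0,∞) such that -v''(t) = v(t)^{-γ} for all t > 0, v(0) = 0, and lim_{t→∞} v'(t) = 1. -/
open Real Set Filter Topology MeasureTheory intervalIntegral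

/-!
Multiplying `-v'' = v^{-γ}` by `v'` gives the first integral `v'² = 1 + 2/(γ-1) · v^{1-γ}`,
where the constant is fixed by `v' → 1` (this is where `γ > 1` enters). The first-order equation
`v' = √(1 + 2/(γ-1) · v^{1-γ})` is solved by separation of variables: `v` is the inverse
of the primitive `u ↦ ∫₀ᵘ dw / √(1 + 2/(γ-1) · |w|^{1-γ})`, a strictly increasing bijection
of `ℝ` since the integrand lies in `(0, 1]` and is bounded below away from `0`. Differentiating the
first integral again recovers the second-order equation, and `v' → 1` because `v → ∞`.
-/

section SeparationOfVariables

variable {g : ℝ → ℝ}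

theorem strictMono_primitive_of_pos (hint : ∀ a b, IntervalIntegrable g volume a b)
    (hpos : ∀ x, 0 < g x) (c : ℝ) : StrictMono fun u => ∫ x in c..u, g x := by
  intro a b hab
  have hsplit := integral_add_adjacent_intervals (hint c a) (hint a b)
  have hpos_ab := intervalIntegral_pos_of_pos_on (hint a b) (fun x _ => hpos x) hab
  simp only
  linarith

theorem mul_sub_le_integral_of_le {a b m : ℝ} (hab : a ≤ b)
    (hint : IntervalIntegrable g volume a b) (hg : ∀ x ∈ Icc a b, m ≤ g x) :
    m * (b - a) ≤ ∫ x in a..b, g x := by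
  have := integral_mono_on hab intervalIntegrable_const hint hg
  simpa [mul_comm] using this

theorem tendsto_primitive_atTop (hint : ∀ a b, IntervalIntegrable g volume a b) {m R : ℝ}
    (hm : 0 < m) (hg : ∀ x, R ≤ x → m ≤ g x) (c : ℝ) :
    Tendsto (fun u => ∫ x in c..u, g x) atTop atTop := by
  refine tendsto_atTop_mono' atTop ?_ <| tendsto_atTop_add_const_left _ (∫ x in c..R, g x) <|
    (tendsto_atTop_add_const_right _ (-R) tendsto_id).const_mul_atTop hm
  filter_upwards [eventually_ge_atTop R] with u hu
  have hsplit := integral_add_adjacent_intervals (hint c R) (hint R u)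
  have hlow := mul_sub_le_integral_of_le hu (hint R u) fun x hx => hg x hx.1
  simp only [id, ← sub_eq_add_neg]
  linarith

theorem tendsto_primitive_atBot (hint : ∀ a b, IntervalIntegrable g volume a b) {m R : ℝ}
    (hm : 0 < m) (hg : ∀ x, x ≤ R → m ≤ g x) (c : ℝ) :
    Tendsto (fun u => ∫ x in c..u, g x) atBot atBot := by
  refine tendsto_atBot_mono' atBot ?_ <| tendsto_atBot_add_const_left _ (∫ x in c..R, g x) <|
    (tendsto_atBot_add_const_right _ (-R) tendsto_id).const_mul_atBot hm
  filter_upwards [eventually_le_atBot R] with u hu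
  have hsplit := integral_add_adjacent_intervals (hint c u) (hint u R)
  have hlow := mul_sub_le_integral_of_le hu (hint u R) fun x hx => hg x hx.2
  simp only [id, ← sub_eq_add_neg]
  linarith

/-- The solution of `v' = (g v)⁻¹` is the inverse of `u ↦ ∫ x in 0..u, g x`. -/
theorem exists_orderIso_hasDerivAt_inv_comp (hint : ∀ a b, IntervalIntegrable g volume a b)
    (hpos : ∀ x, 0 < g x) {m R : ℝ} (hm : 0 < m) (hg : ∀ x, R ≤ |x| → m ≤ g x) {s : Set ℝ}
    (hs : IsOpen s) (hcont : ContinuousOn g s) :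
    ∃ v : ℝ ≃o ℝ, v 0 = 0 ∧ ∀ t, v t ∈ s → HasDerivAt v (g (v t))⁻¹ t := by
  set F : ℝ → ℝ := fun u => ∫ x in 0..u, g x
  have hmono : StrictMono F := strictMono_primitive_of_pos hint hpos 0
  have hsurj : Function.Surjective F :=
    (continuous_primitive hint 0).surjective
      (tendsto_primitive_atTop hint hm (fun x hx => hg x (hx.trans (le_abs_self x))) 0)
      (tendsto_primitive_atBot hint hm
        (fun x hx => hg x (le_abs.mpr (Or.inr (le_neg_of_le_neg hx)))) 0)
  set e := hmono.orderIsoOfSurjective F hsurj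
  refine ⟨e.symm, ?_, fun t ht => ?_⟩
  · simpa [F] using hmono.orderIsoOfSurjective_symm_apply_self F hsurj 0
  · have hF : HasDerivAt F (g (e.symm t)) (e.symm t) :=
      integral_hasDerivAt_right (hint 0 _) (hcont.stronglyMeasurableAtFilter hs _ ht)
        (hcont.continuousAt (hs.mem_nhds ht))
    exact hF.of_local_left_inverse e.symm.continuous.continuousAt (hpos _).ne'
      (Eventually.of_forall fun y => e.apply_symm_apply y)

end SeparationOfVariables

theorem contDiffOn_succ_of_hasDerivAt {f f' : ℝ → ℝ} {s : Set ℝ} {n : ℕ} (hs : IsOpen s)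
    (hf : ∀ x ∈ s, HasDerivAt f (f' x) x) (hf' : ContDiffOn ℝ n f' s) :
    ContDiffOn ℝ (n + 1) f s := by
  rw [contDiffOn_succ_iff_deriv_of_isOpen hs]
  refine ⟨fun x hx => (hf x hx).differentiableAt.differentiableWithinAt, by simp, ?_⟩
  exact hf'.congr fun x hx => (hf x hx).deriv

section Speed

variable {γ : ℝ}

/-- `v' = speed γ v` is the first integral of `-v'' = v^{-γ}` normalized by `v' → 1`;
the absolute value only serves to extend it to `w ≤ 0`. -/
noncomputable def speed (γ w : ℝ) : ℝ := √(1 + 2 / (γ - 1) * |w| ^ (1 - γ))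

theorem one_le_speed (hγ : 1 ≤ γ) (w : ℝ) : 1 ≤ speed γ w :=
  one_le_sqrt.mpr <| le_add_of_nonneg_right <|
    mul_nonneg (div_nonneg zero_le_two (sub_nonneg.mpr hγ)) (rpow_nonneg (abs_nonneg w) _)

theorem speed_le_of_one_le_abs (hγ : 1 ≤ γ) {w : ℝ} (hw : 1 ≤ |w|) :
    speed γ w ≤ √(1 + 2 / (γ - 1)) := by
  refine sqrt_le_sqrt (add_le_add_right ?_ 1)
  exact mul_le_of_le_one_right (div_nonneg zero_le_two (sub_nonneg.mpr hγ))
    (rpow_le_one_of_one_le_of_nonpos hw (sub_nonpos.mpr hγ))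

theorem measurable_speed : Measurable (speed γ) := by
  unfold speed
  fun_prop

theorem continuousOn_speed : ContinuousOn (speed γ) {0}ᶜ := by
  refine (continuousOn_const.add (continuousOn_const.mul ?_)).sqrt
  exact continuous_abs.continuousOn.rpow_const fun w hw => Or.inl (abs_ne_zero.mpr hw)

theorem hasDerivAt_speed (hγ : 1 < γ) {w : ℝ} (hw : 0 < w) :
    HasDerivAt (speed γ) (-w ^ (-γ) / speed γ w) w := by
  have hspeed : (fun x => √(1 + 2 / (γ - 1) * x ^ (1 - γ))) =ᶠ[𝓝 w] speed γ := by
    filter_upwards [Ioi_mem_nhds hw] with x hx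
    rw [speed, abs_of_pos hx]
  have hrad : 0 < 1 + 2 / (γ - 1) * w ^ (1 - γ) := by
    have := sub_pos.mpr hγ
    positivity
  refine HasDerivAt.congr_of_eventuallyEq ?_ hspeed.symm
  refine ((((hasDerivAt_rpow_const (p := 1 - γ) (Or.inl hw.ne')).const_mul
    (2 / (γ - 1))).const_add 1).sqrt hrad.ne').congr_deriv ?_
  rw [speed, abs_of_pos hw, show 1 - γ - 1 = -γ by ring]
  have hγ' : γ - 1 ≠ 0 := (sub_pos.mpr hγ).ne'
  field_simp
  ring

theorem tendsto_speed_atTop (hγ : 1 < γ) : Tendsto (speed γ) atTop (𝓝 1) := by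
  have hspeed : (fun x => √(1 + 2 / (γ - 1) * x ^ (-(γ - 1)))) =ᶠ[atTop] speed γ := by
    filter_upwards [eventually_gt_atTop 0] with x hx
    rw [speed, abs_of_pos hx, neg_sub]
  refine Tendsto.congr' hspeed ?_
  simpa using (((tendsto_rpow_neg_atTop (sub_pos.mpr hγ)).const_mul
    (2 / (γ - 1))).const_add 1).sqrt

theorem exists_orderIso_hasDerivAt_speed (hγ : 1 < γ) :
    ∃ v : ℝ ≃o ℝ, v 0 = 0 ∧ ∀ t, 0 < t → HasDerivAt v (speed γ (v t)) t := by
  have hspeed_pos (w : ℝ) : 0 < speed γ w := zero_lt_one.trans_le (one_le_speed hγ.le w)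
  have hint (a b : ℝ) : IntervalIntegrable (fun w => (speed γ w)⁻¹) volume a b := by
    refine (intervalIntegrable_const (c := (1 : ℝ))).mono_fun'
      measurable_speed.inv.aestronglyMeasurable (ae_of_all _ fun w => ?_)
    simp only
    rw [norm_inv, norm_of_nonneg (hspeed_pos w).le]
    exact inv_le_one_of_one_le₀ (one_le_speed hγ.le w)
  obtain ⟨v, hv0, hv⟩ := exists_orderIso_hasDerivAt_inv_comp hint
    (fun w => inv_pos.mpr (hspeed_pos w)) (by positivity : 0 < (√(1 + 2 / (γ - 1)))⁻¹)
    (fun w hw => inv_anti₀ (hspeed_pos w) (speed_le_of_one_le_abs hγ.le hw))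
    isOpen_compl_singleton (continuousOn_speed.inv₀ fun w _ => (hspeed_pos w).ne')
  refine ⟨v, hv0, fun t ht => ?_⟩
  simpa using hv t (hv0 ▸ v.strictMono ht).ne'

theorem HasDerivAt.speed_comp {v : ℝ → ℝ} {t : ℝ} (hγ : 1 < γ) (hvt : 0 < v t)
    (hv : HasDerivAt v (speed γ (v t)) t) :
    HasDerivAt (fun s => speed γ (v s)) (-v t ^ (-γ)) t := by
  have hspeed := (hasDerivAt_speed hγ hvt).comp t hv
  rwa [div_mul_cancel₀ _ (zero_lt_one.trans_le (one_le_speed hγ.le _)).ne'] at hspeed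

end Speed

/-- for `γ > 1` there exists `v ∈ C²((0,∞)) ∩ C([0,∞))`, positive
on `(0,∞)`, with `-v'' = v^{-γ}` on `(0,∞)`, `v(0) = 0` and `v'(t) → 1` as
`t → ∞`. -/
theorem exists_normalized_ode_solution (γ : ℝ) (hγ : 1 < γ) :
    ∃ v : ℝ → ℝ,
      ContDiffOn ℝ 2 v (Ioi (0 : ℝ)) ∧
      ContinuousOn v (Ici (0 : ℝ)) ∧
      (∀ t > (0 : ℝ), 0 < v t) ∧
      (∀ t > (0 : ℝ), -(deriv (deriv v) t) = (v t) ^ (-γ)) ∧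
      v 0 = 0 ∧
      Tendsto (deriv v) atTop (nhds 1) := by
  obtain ⟨v, hv0, hv'⟩ := exists_orderIso_hasDerivAt_speed hγ
  have hvpos : ∀ t > (0 : ℝ), 0 < v t := fun t ht => hv0 ▸ v.strictMono ht
  have hv'' : ∀ t > (0 : ℝ), HasDerivAt (fun s => speed γ (v s)) (-v t ^ (-γ)) t :=
    fun t ht => (hv' t ht).speed_comp hγ (hvpos t ht)
  have hderiv : ∀ t > (0 : ℝ), deriv v =ᶠ[𝓝 t] fun s => speed γ (v s) := fun t ht => by
    filter_upwards [Ioi_mem_nhds ht] with s hs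
    exact (hv' s hs).deriv
  have hcont : ContinuousOn (fun t => -v t ^ (-γ)) (Ioi 0) :=
    (v.continuous.continuousOn.rpow_const fun t ht => Or.inl (hvpos t ht).ne').neg
  refine ⟨v, ?_, v.continuous.continuousOn, hvpos, fun t ht => ?_, hv0, ?_⟩
  · exact contDiffOn_succ_of_hasDerivAt isOpen_Ioi hv' <|
      contDiffOn_succ_of_hasDerivAt isOpen_Ioi hv'' (contDiffOn_zero.mpr hcont)
  · rw [(hderiv t ht).deriv_eq, (hv'' t ht).deriv, neg_neg]
  · refine ((tendsto_speed_atTop hγ).comp v.tendsto_atTop).congr' ?_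
    filter_upwards [eventually_gt_atTop 0] with t ht
    exact ((hderiv t ht).eq_of_nhds).symm
end

section
/- Let γ > 1 and suppose v₁, v₂ ∈ C²((0,∞)) ∩ C([0,∞)) are both positive on (0,∞) and satisfy -vᵢ''(t) = vᵢ(t)^{-γ} for all t > 0, vᵢ(0) = 0, and lim_{t→∞} vᵢ'(t) = 1, for i = 1, 2. Then v₁ = v₂ on [0,∞). -/
open Real Set Filter Topology

/-!
Multiplying the equation by `v'` shows that the energy `v'² - 2/(γ-1) v^(1-γ)` is conserved.
Since `v'' < 0`, `v'` decreases to its limit `1`, so `v' ≥ 1` and `v → ∞`; hence the energy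
is `1` and every solution solves the autonomous equation `v' = √(1 + 2/(γ-1) v^(1-γ))`. Its
right-hand side is decreasing in `v`, so wherever one solution lies above another the gap cannot
grow; as both start at `0`, neither solution can overtake the other.
-/

theorem le_of_hasDerivAt_of_antitoneOn {F u w : ℝ → ℝ} {a : ℝ} (hF : AntitoneOn F (Ioi 0))
    (hu : ContinuousOn u (Ici a)) (hw : ContinuousOn w (Ici a))
    (hu' : ∀ t > a, HasDerivAt u (F (u t)) t) (hw' : ∀ t > a, HasDerivAt w (F (w t)) t)
    (hw_pos : ∀ t > a, 0 < w t) (ha : u a ≤ w a) : ∀ t ∈ Ici a, u t ≤ w t := by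
  intro t₀ ht₀
  by_contra! hlt
  have hS : IsCompact {t ∈ Icc a t₀ | u t ≤ w t} :=
    isCompact_Icc.of_isClosed_subset
      (isClosed_Icc.isClosed_le (hu.mono Icc_subset_Ici_self) (hw.mono Icc_subset_Ici_self))
      (sep_subset _ _)
  obtain ⟨s, ⟨⟨has, hst₀⟩, hus⟩, hs_max⟩ :=
    hS.exists_isGreatest ⟨a, ⟨left_mem_Icc.2 ht₀, ha⟩⟩
  have hgt : ∀ x ∈ interior (Icc s t₀), a < x ∧ w x < u x := fun x hx ↦ by
    rw [interior_Icc] at hx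
    refine ⟨has.trans_lt hx.1, lt_of_not_ge fun h ↦ ?_⟩
    exact hx.1.not_ge (hs_max ⟨⟨has.trans hx.1.le, hx.2.le⟩, h⟩)
  have hanti : AntitoneOn (fun t ↦ u t - w t) (Icc s t₀) := by
    refine antitoneOn_of_hasDerivWithinAt_nonpos (convex_Icc s t₀)
      ((hu.sub hw).mono fun x hx ↦ has.trans hx.1) (f' := fun x ↦ F (u x) - F (w x))
      (fun x hx ↦ ?_) (fun x hx ↦ ?_) <;>
      obtain ⟨hax, hwu⟩ := hgt x hx
    · exact ((hu' x hax).sub (hw' x hax)).hasDerivWithinAt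
    · exact sub_nonpos.2 (hF (hw_pos x hax) ((hw_pos x hax).trans hwu) hwu.le)
  have := hanti ⟨le_rfl, hst₀⟩ ⟨hst₀, le_rfl⟩ hst₀
  simp only at this
  linarith

theorem antitoneOn_sqrt_one_add_mul_rpow {c p : ℝ} (hc : 0 ≤ c) (hp : p ≤ 0) :
    AntitoneOn (fun y ↦ √(1 + c * y ^ p)) (Ioi 0) := fun _ hx _ _ hxy ↦
  Real.sqrt_le_sqrt <|
    add_le_add_right (mul_le_mul_of_nonneg_left (rpow_le_rpow_of_nonpos hx hxy hp) hc) 1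

theorem tendsto_atTop_of_le_deriv {f : ℝ → ℝ} {a c : ℝ} (hc : 0 < c)
    (hf : DifferentiableOn ℝ f (Ioi a)) (hf' : ∀ x > a, c ≤ deriv f x) :
    Tendsto f atTop atTop := by
  have hgrowth : ∀ x ≥ a + 1, c * (x - (a + 1)) + f (a + 1) ≤ f x := fun x hx ↦ by
    have := (convex_Ioi a).mul_sub_le_image_sub_of_le_deriv hf.continuousOn
      (by rwa [interior_Ioi]) (by rwa [interior_Ioi]) (a + 1) (by simp) x
      (by simp only [mem_Ioi]; linarith) hx
    linarith
  refine tendsto_atTop_mono' atTop (eventually_ge_atTop (a + 1) |>.mono hgrowth) ?_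
  exact tendsto_atTop_add_const_right _ _
    ((tendsto_atTop_add_const_right _ _ tendsto_id).const_mul_atTop hc)

theorem ContDiffOn.hasDerivAt_deriv_of_two {f : ℝ → ℝ} {s : Set ℝ} (hf : ContDiffOn ℝ 2 f s)
    (hs : IsOpen s) {x : ℝ} (hx : x ∈ s) :
    HasDerivAt f (deriv f x) x ∧ HasDerivAt (deriv f) (deriv (deriv f) x) x :=
  ⟨((hf.differentiableOn (by norm_num)).differentiableAt (hs.mem_nhds hx)).hasDerivAt,
    (((hf.deriv_of_isOpen hs (by norm_num : (1 : WithTop ℕ∞) + 1 ≤ 2)).differentiableOn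
      one_ne_zero).differentiableAt (hs.mem_nhds hx)).hasDerivAt⟩

noncomputable def odeEnergy (γ : ℝ) (v : ℝ → ℝ) (t : ℝ) : ℝ :=
  deriv v t ^ 2 - 2 / (γ - 1) * v t ^ (1 - γ)

theorem hasDerivAt_odeEnergy {γ t : ℝ} {v : ℝ → ℝ} (hγ : γ ≠ 1)
    (hv : HasDerivAt v (deriv v t) t) (hv' : HasDerivAt (deriv v) (deriv (deriv v) t) t)
    (hpos : 0 < v t) (hode : -deriv (deriv v) t = v t ^ (-γ)) :
    HasDerivAt (odeEnergy γ v) 0 t := by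
  have hpow : HasDerivAt (fun s ↦ v s ^ (1 - γ)) (deriv v t * (1 - γ) * v t ^ (-γ)) t := by
    simpa only [sub_sub_cancel_left] using hv.rpow_const (p := 1 - γ) (Or.inl hpos.ne')
  have hsq : HasDerivAt (fun s ↦ deriv v s ^ 2) (2 * deriv v t * deriv (deriv v) t) t := by
    simpa using hv'.fun_pow 2
  refine (hsq.fun_sub (hpow.const_mul (2 / (γ - 1)))).congr_deriv ?_
  have : γ - 1 ≠ 0 := sub_ne_zero.2 hγ
  field_simp
  linear_combination -2 * (γ - 1) * deriv v t * hode

section Solution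

variable {γ : ℝ} {v : ℝ → ℝ} (hγ : 1 < γ) (h2 : ContDiffOn ℝ 2 v (Ioi 0))
  (hpos : ∀ t > (0 : ℝ), 0 < v t) (hode : ∀ t > (0 : ℝ), -(deriv (deriv v) t) = (v t) ^ (-γ))
  (hlim : Tendsto (deriv v) atTop (𝓝 1))
include h2 hpos hode hlim

theorem one_le_deriv_of_solution : ∀ t > 0, 1 ≤ deriv v t := by
  have hd := fun x (hx : x ∈ Ioi (0 : ℝ)) ↦ (h2.hasDerivAt_deriv_of_two isOpen_Ioi hx).2
  have hanti : AntitoneOn (deriv v) (Ioi 0) := by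
    refine antitoneOn_of_hasDerivWithinAt_nonpos (convex_Ioi 0) (f' := deriv (deriv v))
      (fun x hx ↦ (hd x hx).continuousAt.continuousWithinAt) ?_ ?_ <;>
      rw [interior_Ioi] <;> intro x hx
    · exact (hd x hx).hasDerivWithinAt
    · linarith [hode x hx, Real.rpow_pos_of_pos (hpos x hx) (-γ)]
  intro t ht
  exact le_of_tendsto hlim <| (eventually_gt_atTop t).mono fun s hs ↦
    hanti ht (ht.trans hs) hs.le

include hγ

theorem odeEnergy_eq_one_of_solution : ∀ t > 0, odeEnergy γ v t = 1 := by
  have hd := fun x (hx : x ∈ Ioi (0 : ℝ)) ↦ h2.hasDerivAt_deriv_of_two isOpen_Ioi hx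
  have hE : ∀ x ∈ Ioi (0 : ℝ), HasDerivAt (odeEnergy γ v) 0 x := fun x hx ↦
    hasDerivAt_odeEnergy hγ.ne' (hd x hx).1 (hd x hx).2 (hpos x hx) (hode x hx)
  have hconst : ∀ s ∈ Ioi (0 : ℝ), ∀ t ∈ Ioi (0 : ℝ), odeEnergy γ v s = odeEnergy γ v t :=
    fun s hs t ht ↦ isOpen_Ioi.is_const_of_deriv_eq_zero isPreconnected_Ioi
      (fun x hx ↦ (hE x hx).differentiableAt.differentiableWithinAt)
      (fun x hx ↦ (hE x hx).deriv) hs ht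
  have hv_top : Tendsto v atTop atTop :=
    tendsto_atTop_of_le_deriv one_pos
      (fun x hx ↦ (hd x hx).1.differentiableAt.differentiableWithinAt)
      (one_le_deriv_of_solution h2 hpos hode hlim)
  have hlim_E : Tendsto (odeEnergy γ v) atTop (𝓝 (1 ^ 2 - 2 / (γ - 1) * 0)) := by
    refine (hlim.pow 2).sub (Tendsto.const_mul _ ?_)
    simpa only [neg_sub, Function.comp_def] using
      (tendsto_rpow_neg_atTop (sub_pos.2 hγ)).comp hv_top
  intro t ht
  refine tendsto_nhds_unique (tendsto_const_nhds.congr' ?_) hlim_E |>.trans (by norm_num)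
  exact (eventually_gt_atTop 0).mono fun s hs ↦ hconst t ht s hs

theorem hasDerivAt_sqrt_of_solution :
    ∀ t > 0, HasDerivAt v (√(1 + 2 / (γ - 1) * v t ^ (1 - γ))) t := by
  intro t ht
  have hsq : deriv v t ^ 2 = 1 + 2 / (γ - 1) * v t ^ (1 - γ) := by
    have := odeEnergy_eq_one_of_solution hγ h2 hpos hode hlim t ht
    rw [odeEnergy] at this
    linarith
  have hd_nonneg := zero_le_one.trans (one_le_deriv_of_solution h2 hpos hode hlim t ht)
  rw [← hsq, Real.sqrt_sq hd_nonneg]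
  exact (h2.hasDerivAt_deriv_of_two isOpen_Ioi ht).1

end Solution

/-- uniqueness, for `γ > 1`, of the positive solution of
`-v'' = v^{-γ}` on `(0,∞)` with `v(0) = 0` and `v'(t) → 1` as `t → ∞`. -/
theorem normalized_ode_solution_unique (γ : ℝ) (hγ : 1 < γ) (v₁ v₂ : ℝ → ℝ)
    (h₁2 : ContDiffOn ℝ 2 v₁ (Ioi (0 : ℝ)))
    (h₁c : ContinuousOn v₁ (Ici (0 : ℝ)))
    (h₁pos : ∀ t > (0 : ℝ), 0 < v₁ t)
    (h₁ode : ∀ t > (0 : ℝ), -(deriv (deriv v₁) t) = (v₁ t) ^ (-γ))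
    (h₁0 : v₁ 0 = 0)
    (h₁lim : Tendsto (deriv v₁) atTop (nhds 1))
    (h₂2 : ContDiffOn ℝ 2 v₂ (Ioi (0 : ℝ)))
    (h₂c : ContinuousOn v₂ (Ici (0 : ℝ)))
    (h₂pos : ∀ t > (0 : ℝ), 0 < v₂ t)
    (h₂ode : ∀ t > (0 : ℝ), -(deriv (deriv v₂) t) = (v₂ t) ^ (-γ))
    (h₂0 : v₂ 0 = 0)
    (h₂lim : Tendsto (deriv v₂) atTop (nhds 1)) :
    ∀ t ∈ Ici (0 : ℝ), v₁ t = v₂ t := by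
  have hF := antitoneOn_sqrt_one_add_mul_rpow (div_pos two_pos (sub_pos.2 hγ)).le
    (sub_nonpos.2 hγ.le)
  have h₁ := hasDerivAt_sqrt_of_solution hγ h₁2 h₁pos h₁ode h₁lim
  have h₂ := hasDerivAt_sqrt_of_solution hγ h₂2 h₂pos h₂ode h₂lim
  intro t ht
  exact le_antisymm
    (le_of_hasDerivAt_of_antitoneOn hF h₁c h₂c h₁ h₂ h₂pos (h₁0.trans h₂0.symm).le t ht)
    (le_of_hasDerivAt_of_antitoneOn hF h₂c h₁c h₂ h₁ h₁pos (h₂0.trans h₁0.symm).le t ht)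
end

section
/- Let γ > 0 and let u ∈ C²((0,∞)) satisfy u(t) > 0 and u''(t) = -u(t)^{-γ} for all t > 0. Then u is unbounded above; in fact u(t) → +∞ as t → +∞. -/
open Real Set Filter

/-!
A positive solution of `u'' = -g(u)` with `g > 0` is strictly concave. Its derivative stays
positive: once `u'` took a negative value `m`, we would get `u(t) ≤ u(t₀) + m (t - t₀) → -∞`.
So `u` is increasing. If `u` were bounded by `b`, then for `t ≥ t₀` the values `u(t)` would
lie in the compact interval `[u(t₀), b] ⊆ (0, ∞)`, on which the continuous function `g` has
a positive minimum `c`. Then `u'' ≤ -c` and `u'(t) → -∞`, contradicting `u' > 0`.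
-/

theorem exists_deriv_gt_of_pos {f : ℝ → ℝ} {a m : ℝ} (hf : DifferentiableOn ℝ f (Ioi a))
    (hpos : ∀ x > a, 0 < f x) (hm : m < 0) : ∃ x > a, m < deriv f x := by
  by_contra! hf'
  have hx₀ : a < a + 1 := lt_add_one a
  have hbound : ∀ᶠ y in atTop, f y ≤ f (a + 1) + m * (y - (a + 1)) := by
    filter_upwards [eventually_ge_atTop (a + 1)] with y hy
    have := (convex_Ioi a).image_sub_le_mul_sub_of_deriv_le hf.continuousOn
      (by rwa [interior_Ioi]) (by rw [interior_Ioi]; exact hf') _ hx₀ y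
      (hx₀.trans_le hy) hy
    linarith
  have hlim : Tendsto f atTop atBot :=
    tendsto_atBot_mono' _ hbound <| tendsto_atBot_add_const_left _ _ <|
      (tendsto_atTop_add_const_right _ _ tendsto_id).const_mul_atTop_of_neg hm
  obtain ⟨y, hy, hya⟩ :=
    ((hlim.eventually (eventually_lt_atBot 0)).and (eventually_gt_atTop a)).exists
  exact (hpos y hya).not_gt hy

theorem deriv_pos_of_deriv_deriv_neg {f : ℝ → ℝ} {a : ℝ}
    (hf : DifferentiableOn ℝ f (Ioi a)) (hpos : ∀ x > a, 0 < f x)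
    (hf'' : ∀ x > a, deriv (deriv f) x < 0) {x : ℝ} (hx : a < x) :
    0 < deriv f x := by
  have hanti : StrictAntiOn (deriv f) (Ioi a) := by
    refine strictAntiOn_of_deriv_neg (convex_Ioi a) (fun y hy => ?_)
      (by rw [interior_Ioi]; exact hf'')
    exact (differentiableAt_of_deriv_ne_zero (hf'' y hy).ne).continuousAt.continuousWithinAt
  have hx₁ : a < x + 1 := hx.trans (lt_add_one x)
  by_contra! hx'
  obtain ⟨y, hy, hmy⟩ := exists_deriv_gt_of_pos (hf.mono (Ioi_subset_Ioi hx₁.le))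
    (fun y hy => hpos y (hx₁.trans hy)) ((hanti hx hx₁ (lt_add_one x)).trans_le hx')
  exact (hanti hx₁ (hx₁.trans hy) hy).not_gt hmy

theorem strictMonoOn_of_deriv_deriv_neg {f : ℝ → ℝ} {a : ℝ}
    (hf : DifferentiableOn ℝ f (Ioi a)) (hpos : ∀ x > a, 0 < f x)
    (hf'' : ∀ x > a, deriv (deriv f) x < 0) :
    StrictMonoOn f (Ioi a) :=
  strictMonoOn_of_deriv_pos (convex_Ioi a) hf.continuousOn fun x hx =>
    deriv_pos_of_deriv_deriv_neg hf hpos hf'' (by rwa [interior_Ioi] at hx)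

theorem not_bddAbove_of_deriv_deriv_le_neg {u g : ℝ → ℝ} {a : ℝ}
    (hu : ContDiffOn ℝ 2 u (Ioi a)) (hupos : ∀ t > a, 0 < u t) (hg : ContinuousOn g (Ioi 0))
    (hgpos : ∀ x > 0, 0 < g x) (hode : ∀ t > a, deriv (deriv u) t ≤ -g (u t)) :
    ¬BddAbove (u '' Ioi a) := by
  have hu'' : ∀ t > a, deriv (deriv u) t < 0 := fun t ht =>
    (hode t ht).trans_lt (neg_lt_zero.2 (hgpos _ (hupos t ht)))
  have hmono := strictMonoOn_of_deriv_deriv_neg (hu.differentiableOn two_ne_zero) hupos hu''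
  rintro ⟨b, hb⟩
  have ht₀ : a < a + 1 := lt_add_one a
  obtain ⟨c, hc, hgc⟩ := (isCompact_Icc (a := u (a + 1)) (b := b)).exists_forall_le'
    (hg.mono fun x hx => (hupos _ ht₀).trans_le hx.1)
    (fun x hx => hgpos x ((hupos _ ht₀).trans_le hx.1))
  have hu' : DifferentiableOn ℝ (deriv u) (Ioi (a + 1)) :=
    ((hu.deriv_of_isOpen isOpen_Ioi le_rfl).differentiableOn one_ne_zero).mono
      (Ioi_subset_Ioi ht₀.le)
  obtain ⟨t, ht, hct⟩ := exists_deriv_gt_of_pos hu'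
    (fun t ht => deriv_pos_of_deriv_deriv_neg (hu.differentiableOn two_ne_zero) hupos hu''
      (ht₀.trans ht)) (neg_lt_zero.2 hc)
  have hta : a < t := ht₀.trans ht
  have hut : u t ∈ Icc (u (a + 1)) b := ⟨(hmono ht₀ hta ht).le, hb (mem_image_of_mem u hta)⟩
  linarith [hode t hta, hgc _ hut]

theorem tendsto_atTop_of_monotoneOn_Ioi {f : ℝ → ℝ} {a : ℝ} (hf : MonotoneOn f (Ioi a))
    (hunb : ¬BddAbove (f '' Ioi a)) : Tendsto f atTop atTop := by
  rw [tendsto_atTop_atTop]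
  intro b
  obtain ⟨_, ⟨t, ht, rfl⟩, hbt⟩ := not_bddAbove_iff.1 hunb b
  exact ⟨t, fun s hs => hbt.le.trans (hf ht (ht.trans_le hs) hs)⟩

theorem ode_solution_unbounded_general (γ : ℝ) (u : ℝ → ℝ)
    (hu2 : ContDiffOn ℝ 2 u (Ioi (0 : ℝ)))
    (hupos : ∀ t > (0 : ℝ), 0 < u t)
    (hode : ∀ t > (0 : ℝ), deriv (deriv u) t = -((u t) ^ (-γ))) :
    Tendsto u atTop atTop := by
  have hg : ContinuousOn (fun x : ℝ => x ^ (-γ)) (Ioi 0) := fun x hx =>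
    (continuousAt_rpow_const x _ (Or.inl (ne_of_gt hx))).continuousWithinAt
  have hgpos : ∀ x > (0 : ℝ), 0 < x ^ (-γ) := fun x hx => rpow_pos_of_pos hx _
  have hu'' : ∀ t > (0 : ℝ), deriv (deriv u) t < 0 := fun t ht => by
    rw [hode t ht]
    exact neg_lt_zero.2 (hgpos _ (hupos t ht))
  exact tendsto_atTop_of_monotoneOn_Ioi
    (strictMonoOn_of_deriv_deriv_neg (hu2.differentiableOn two_ne_zero) hupos hu'').monotoneOn
    (not_bddAbove_of_deriv_deriv_le_neg hu2 hupos hg hgpos fun t ht => (hode t ht).le)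

/-- a positive `C²` solution of `u'' = -u^{-γ}` on `(0,∞)` is
unbounded above; in fact `u(t) → +∞` as `t → +∞`. -/
theorem ode_solution_unbounded (γ : ℝ) (hγ : 0 < γ) (u : ℝ → ℝ)
    (hu2 : ContDiffOn ℝ 2 u (Ioi (0 : ℝ)))
    (hupos : ∀ t > (0 : ℝ), 0 < u t)
    (hode : ∀ t > (0 : ℝ), deriv (deriv u) t = -((u t) ^ (-γ))) :
    Tendsto u atTop atTop :=
  ode_solution_unbounded_general γ u hu2 hupos hode
end

section
/- Let 0 < γ ≤ 1. Then there exists no function u ∈ C²((0,∞)) with u(t) > 0 and u''(t) = -u(t)^{-γ} for all t > 0. (Consequently the one-dimensional problem -u'' = u^{-γ} on (0,∞) with u > 0 and u(0) = 0 has no solution when 0 < γ ≤ 1.) -/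
open Real Set

/-!
A positive solution is concave, and a concave function bounded below on a half line is
nondecreasing; so `u' ≥ 0` and, by the tangent line at `1`, `u t ≤ C t` for `t ≥ 1`. Then
`u'' = -u^{-γ} ≤ -(C t)^{-γ} ≤ -C^{-γ} / t` because `γ ≤ 1`, so `u' t ≤ u' 1 - C^{-γ} log t`,
which eventually contradicts `u' ≥ 0`.
-/

namespace ConcaveOn

variable {S : Set ℝ} {f : ℝ → ℝ} {x y : ℝ}

lemma le_add_deriv_mul_sub (hf : ConcaveOn ℝ S f) (hx : x ∈ S) (hy : y ∈ S)
    (hfd : DifferentiableAt ℝ f x) : f y ≤ f x + deriv f x * (y - x) := by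
  rcases lt_trichotomy x y with hxy | rfl | hyx
  · have hslope := hf.slope_le_deriv hx hy hxy hfd
    rw [slope_def_field, div_le_iff₀ (sub_pos.2 hxy)] at hslope
    linarith
  · simp
  · have hslope := hf.deriv_le_slope hy hx hyx hfd
    rw [slope_def_field, le_div_iff₀ (sub_pos.2 hyx)] at hslope
    linarith

lemma deriv_nonneg_of_bddBelow_Ioi {a : ℝ} (hf : ConcaveOn ℝ (Ioi a) f)
    (hbdd : BddBelow (f '' Ioi a)) (hx : x ∈ Ioi a) (hfd : DifferentiableAt ℝ f x) :
    0 ≤ deriv f x := by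
  obtain ⟨m, hm⟩ := hbdd
  by_contra! hneg
  set y := x + (f x - m) / -deriv f x + 1
  have hxy : x < y := by
    show x < x + _ + 1
    have : 0 ≤ (f x - m) / -deriv f x :=
      div_nonneg (sub_nonneg.2 (hm (mem_image_of_mem f hx))) (by linarith)
    linarith
  have hy : y ∈ Ioi a := lt_trans hx hxy
  have htangent_at_y : f x + deriv f x * (y - x) = m + deriv f x := by
    have hd : deriv f x ≠ 0 := hneg.ne
    simp only [y]
    field_simp
    ring
  linarith [hf.le_add_deriv_mul_sub hx hy hfd, hm (mem_image_of_mem f hy)]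

end ConcaveOn

lemma add_mul_log_le_of_deriv_le {v : ℝ → ℝ} {c t : ℝ} (hcont : ContinuousOn v (Ici 1))
    (hdiff : DifferentiableOn ℝ v (Ioi 1)) (hderiv : ∀ s > 1, deriv v s ≤ -(c / s))
    (ht : 1 ≤ t) : v t + c * log t ≤ v 1 := by
  have hw : ∀ s > (1 : ℝ), HasDerivAt (fun s => v s + c * log s) (deriv v s + c / s) s :=
    fun s hs => by
      simpa only [div_eq_mul_inv] using
        (hdiff.differentiableAt (Ioi_mem_nhds hs)).hasDerivAt.fun_add
          ((hasDerivAt_log (by positivity)).const_mul c)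
  have hanti : AntitoneOn (fun s => v s + c * log s) (Ici 1) := by
    refine antitoneOn_of_deriv_nonpos (convex_Ici 1) ?_ ?_ ?_
    · exact hcont.add (continuousOn_const.mul
        (continuousOn_log.mono fun s (hs : 1 ≤ s) => (zero_lt_one.trans_le hs).ne'))
    · rw [interior_Ici]
      exact fun s hs => (hw s hs).differentiableAt.differentiableWithinAt
    · rw [interior_Ici]
      intro s hs
      rw [(hw s hs).deriv]
      linarith [hderiv s hs]
  simpa using hanti self_mem_Ici ht ht

lemma div_le_rpow_neg_of_le_mul {γ C x t : ℝ} (hγ0 : 0 ≤ γ) (hγ1 : γ ≤ 1) (ht : 1 ≤ t)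
    (hx : 0 < x) (hxC : x ≤ C * t) : C ^ (-γ) / t ≤ x ^ (-γ) := by
  have hC : 0 < C := pos_of_mul_pos_left (hx.trans_le hxC) (by linarith)
  calc C ^ (-γ) / t = C ^ (-γ) * t ^ (-1 : ℝ) := by rw [rpow_neg_one, div_eq_mul_inv]
    _ ≤ C ^ (-γ) * t ^ (-γ) := by gcongr
    _ = (C * t) ^ (-γ) := (mul_rpow hC.le (by linarith)).symm
    _ ≤ x ^ (-γ) := rpow_le_rpow_of_nonpos hx hxC (by linarith)

/-- for `0 < γ ≤ 1` there is no positive `C²` solution of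
`u'' = -u^{-γ}` on the half line `(0,∞)`. -/
theorem no_global_ode_solution (γ : ℝ) (hγ0 : 0 < γ) (hγ1 : γ ≤ 1) :
    ¬ ∃ u : ℝ → ℝ,
        ContDiffOn ℝ 2 u (Ioi (0 : ℝ)) ∧
        (∀ t > (0 : ℝ), 0 < u t) ∧
        (∀ t > (0 : ℝ), deriv (deriv u) t = -((u t) ^ (-γ))) := by
  rintro ⟨u, hu, hpos, hode⟩
  have hdu : DifferentiableOn ℝ u (Ioi 0) := hu.differentiableOn (by norm_num)
  have hddu : DifferentiableOn ℝ (deriv u) (Ioi 0) :=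
    (hu.deriv_of_isOpen isOpen_Ioi (m := 1) (by norm_num)).differentiableOn (by norm_num)
  have hconc : ConcaveOn ℝ (Ioi 0) u :=
    concaveOn_of_deriv2_nonpos' (convex_Ioi 0) hdu hddu fun t ht => by
      show deriv (deriv u) t ≤ 0
      rw [hode t ht, neg_nonpos]
      exact (rpow_pos_of_pos (hpos t ht) _).le
  have hdu_at : ∀ t > 0, DifferentiableAt ℝ u t := fun t ht =>
    hdu.differentiableAt (Ioi_mem_nhds ht)
  have hmono : ∀ t > 0, 0 ≤ deriv u t := fun t ht =>
    hconc.deriv_nonneg_of_bddBelow_Ioi ⟨0, by rintro _ ⟨s, hs, rfl⟩; exact (hpos s hs).le⟩ ht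
      (hdu_at t ht)
  set C := u 1 + deriv u 1
  have hlin : ∀ t ≥ 1, u t ≤ C * t := fun t ht => by
    have htangent := hconc.le_add_deriv_mul_sub (mem_Ioi.2 one_pos)
      (mem_Ioi.2 (zero_lt_one.trans_le ht)) (hdu_at 1 one_pos)
    nlinarith [hpos 1 one_pos, hmono 1 one_pos]
  have hlog : ∀ t ≥ 1, deriv u t + C ^ (-γ) * log t ≤ deriv u 1 := fun t ht =>
    add_mul_log_le_of_deriv_le (hddu.continuousOn.mono (Ici_subset_Ioi.2 one_pos))
      (hddu.mono (Ioi_subset_Ioi zero_le_one))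
      (fun s hs => by
        rw [hode s (by linarith), neg_le_neg_iff]
        exact div_le_rpow_neg_of_le_mul hγ0.le hγ1 hs.le (hpos s (by linarith)) (hlin s hs.le))
      ht
  have hCγ : 0 < C ^ (-γ) :=
    rpow_pos_of_pos (add_pos_of_pos_of_nonneg (hpos 1 one_pos) (hmono 1 one_pos)) _
  obtain ⟨t, hlarge, ht⟩ := (((tendsto_log_atTop.const_mul_atTop hCγ).eventually_gt_atTop
    (deriv u 1)).and (Filter.eventually_ge_atTop 1)).exists
  linarith [hlog t ht, hmono t (by linarith)]
end
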